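/- LP^MLN programs 𝔽 and 𝔾 over 𝒫 are structurally equivalent if and only if they have exactly the same soft HT models. -/

import Mathlib

namespace LPMLN

/-- Propositional formulas over a set of atoms `P`, built from atoms and `⊥`
using `∧`, `∨`, `→`. -/
inductive Formula (P : Type) : Type where
  | atom : P → Formula P
  | bot  : Formula P
  | and  : Formula P → Formula P → Formula P
  | or   : Formula P → Formula P → Formula P
  | imp  : Formula P → Formula P → Formula P
deriving DecidableEq

variable {P : Type} [DecidableEq P]

/-- `¬F` abbreviates `F → ⊥`. -/
def Formula.neg (F : Formula P) : Formula P := .imp F .bot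

/-- Classical evaluation of a formula in an interpretation `X ⊆ P`. -/
def Formula.eval (X : Finset P) : Formula P → Bool
  | .atom p => decide (p ∈ X)
  | .bot => false
  | .and F G => F.eval X && G.eval X
  | .or F G => F.eval X || G.eval X
  | .imp F G => !(F.eval X) || G.eval X

/-- Classical satisfaction `X ⊨ F`. -/
def Formula.sat (X : Finset P) (F : Formula P) : Prop := F.eval X = true

/-- The reduct `F^X`: every maximal subformula not satisfied by `X` is replaced by `⊥`. -/
def Formula.reduct (X : Finset P) : Formula P → Formula P
  | .atom p => if p ∈ X then .atom p else .bot
  | .bot => .bot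
  | .and F G => if (Formula.and F G).eval X then .and (F.reduct X) (G.reduct X) else .bot
  | .or F G => if (Formula.or F G).eval X then .or (F.reduct X) (G.reduct X) else .bot
  | .imp F G => if (Formula.imp F G).eval X then .imp (F.reduct X) (G.reduct X) else .bot

/-- `X` satisfies a (finite) set of formulas. -/
def satSet (X : Finset P) (Γ : Finset (Formula P)) : Prop := ∀ F ∈ Γ, F.sat X

/-- The reduct `Γ^X` of a finite set of formulas. -/
def reductSet (X : Finset P) (Γ : Finset (Formula P)) : Finset (Formula P) :=
  Γ.image (Formula.reduct X)

/-- `X` is a stable model of `Γ` if `X ⊨ Γ^X` and no proper subset of `X` satisfies `Γ^X`. -/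
def StableModel (Γ : Finset (Formula P)) (X : Finset P) : Prop :=
  satSet X (reductSet X Γ) ∧ ∀ Y, Y ⊂ X → ¬ satSet Y (reductSet X Γ)

/-- A weight is a real number (soft) or the symbol `α` (hard). -/
inductive Weight : Type where
  | soft : ℝ → Weight
  | hard : Weight

noncomputable instance : DecidableEq Weight := Classical.decEq _

/-- An LP^MLN program: a finite set of weighted formulas `w : R`. -/
abbrev Program (P : Type) [DecidableEq P] := Finset (Weight × Formula P)

/-- `𝔽_X`: the weighted formulas of `𝔽` whose formula is satisfied by `X`. -/
noncomputable def progSat (𝔽 : Program P) (X : Finset P) : Program P :=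
  𝔽.filter (fun r => r.2.eval X = true)

/-- `𝔽̄`: the formulas of `𝔽`, with weights dropped. -/
noncomputable def formulas (𝔽 : Program P) : Finset (Formula P) := 𝔽.image Prod.snd

/-- `X` is a soft stable model of `𝔽` (i.e. `X ∈ SM[𝔽]`) if `X` is a stable model of `𝔽̄_X`. -/
def SoftStable (𝔽 : Program P) (X : Finset P) : Prop :=
  StableModel (formulas (progSat 𝔽 X)) X

/-- w-expressions: either zero or a formal expression `e^{c₁ + c₂·α}` with `c₁ : ℝ`, `c₂ : ℤ`. -/
inductive WExpr : Type where
  | zero : WExpr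
  | exp : ℝ → ℤ → WExpr

/-- Multiplication of w-expressions: add exponents componentwise; zero is absorbing. -/
def WExpr.mul : WExpr → WExpr → WExpr
  | .zero, _ => .zero
  | _, .zero => .zero
  | .exp a b, .exp c d => .exp (a + c) (b + d)

/-- Inverse of a w-expression: negate both exponents. -/
def WExpr.inv : WExpr → WExpr
  | .zero => .zero
  | .exp a b => .exp (-a) (-b)

/-- Evaluation of a w-expression at a real number `a`. -/
noncomputable def WExpr.eval (a : ℝ) : WExpr → ℝ
  | .zero => 0
  | .exp c₁ c₂ => Real.exp (c₁ + c₂ * a)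

/-- The real contribution of a weight (hard rules contribute `0` to the soft sum). -/
def softWeight : Weight → ℝ
  | .soft r => r
  | .hard => 0

/-- Sum of the weights of the soft rules of `𝔽`. -/
noncomputable def softSum (𝔽 : Program P) : ℝ := ∑ r ∈ 𝔽, softWeight r.1

/-- The number of hard rules of `𝔽`. -/
noncomputable def hardCount (𝔽 : Program P) : ℤ :=
  ((𝔽.filter (fun r => r.1 = Weight.hard)).card : ℤ)

/-- `TW(𝔽) = e^{c₁ + c₂·α}` where `c₁` is the sum of the soft weights and
`c₂` the number of hard rules. -/
noncomputable def TW (𝔽 : Program P) : WExpr := .exp (softSum 𝔽) (hardCount 𝔽)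

open Classical in
/-- `W_𝔽(X) = TW(𝔽_X)` if `X ∈ SM[𝔽]`, and zero otherwise. -/
noncomputable def W (𝔽 : Program P) (X : Finset P) : WExpr :=
  if SoftStable 𝔽 X then TW (progSat 𝔽 X) else .zero

open Classical in
/-- `W^pnt_𝔽(X) = TW(𝔽 \ 𝔽_X)⁻¹` if `X ∈ SM[𝔽]`, and zero otherwise. -/
noncomputable def Wpnt (𝔽 : Program P) (X : Finset P) : WExpr :=
  if SoftStable 𝔽 X then (TW (𝔽 \ progSat 𝔽 X)).inv else .zero

/-- `P_𝔽(X)`: the limit as `a → ∞` of the normalized evaluation of `W_𝔽(X)`. -/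
noncomputable def Pr [Fintype P] (𝔽 : Program P) (X : Finset P) : ℝ :=
  Filter.limUnder Filter.atTop
    (fun a : ℝ => (W 𝔽 X).eval a / ∑ Y : Finset P, (W 𝔽 Y).eval a)

/-- `P^pnt_𝔽(X)`: the limit as `a → ∞` of the normalized evaluation of `W^pnt_𝔽(X)`. -/
noncomputable def PrPnt [Fintype P] (𝔽 : Program P) (X : Finset P) : ℝ :=
  Filter.limUnder Filter.atTop
    (fun a : ℝ => (Wpnt 𝔽 X).eval a / ∑ Y : Finset P, (Wpnt 𝔽 Y).eval a)

/-- Weak equivalence: the same probability distribution. -/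
def WeakEquiv [Fintype P] (𝔽 𝔾 : Program P) : Prop :=
  ∀ X : Finset P, Pr 𝔽 X = Pr 𝔾 X

/-- Strong equivalence of LP^MLN programs. -/
def StrongEquiv [Fintype P] (𝔽 𝔾 : Program P) : Prop :=
  ∀ (ℍ : Program P) (X : Finset P), Pr (𝔽 ∪ ℍ) X = Pr (𝔾 ∪ ℍ) X

/-- Structural equivalence of LP^MLN programs. -/
def StructEquiv (𝔽 𝔾 : Program P) : Prop :=
  ∀ (ℍ : Program P) (X : Finset P), SoftStable (𝔽 ∪ ℍ) X ↔ SoftStable (𝔾 ∪ ℍ) X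

/-- HT satisfaction `⟨Y,X⟩ ⊨ₕₜ F` (at the world "here"). -/
def htSat (Y X : Finset P) : Formula P → Prop
  | .atom p => p ∈ Y
  | .bot => False
  | .and F G => htSat Y X F ∧ htSat Y X G
  | .or F G => htSat Y X F ∨ htSat Y X G
  | .imp F G => (htSat Y X F → htSat Y X G) ∧ (Formula.imp F G).sat X

/-- `⟨Y,X⟩` is an HT model of a set `Γ` of formulas. -/
def HTModel (Γ : Finset (Formula P)) (Y X : Finset P) : Prop :=
  Y ⊆ X ∧ ∀ F ∈ Γ, htSat Y X F

/-- `⟨Y,X⟩` is a soft HT model of an LP^MLN program `𝔽`. -/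
def SoftHT (𝔽 : Program P) (Y X : Finset P) : Prop :=
  Y ⊆ X ∧ ∀ r ∈ progSat 𝔽 X, htSat Y X r.2

/-- The choice formula `{F}^ch = F ∨ ¬F`. -/
def Formula.ch (F : Formula P) : Formula P := .or F F.neg

/-- `{Γ}^ch`, choice formulas of a set of formulas. -/
def chSet (Γ : Finset (Formula P)) : Finset (Formula P) := Γ.image Formula.ch

/-- Renaming of atoms. -/
def Formula.rename {Q : Type} (f : P → Q) : Formula P → Formula Q
  | .atom p => .atom (f p)
  | .bot => .bot
  | .and F G => .and (F.rename f) (G.rename f)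
  | .or F G => .or (F.rename f) (G.rename f)
  | .imp F G => .imp (F.rename f) (G.rename f)

/-- `Δ_{𝒫'}(F)`, a formula over `𝒫 ∪ 𝒫'`; unprimed atoms are `Sum.inl p`,
primed atoms `p'` are `Sum.inr p`. -/
def Formula.delta : Formula P → Formula (P ⊕ P)
  | .atom p => .atom (Sum.inr p)
  | .bot => .bot
  | .and F G => .and F.delta G.delta
  | .or F G => .or F.delta G.delta
  | .imp F G => .and (.imp F.delta G.delta)
      (.imp (F.rename Sum.inl) (G.rename Sum.inl))

/-- `Δ_{𝒫'}(Γ)` for a set of formulas. -/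
def deltaSet (Γ : Finset (Formula P)) : Finset (Formula (P ⊕ P)) :=
  Γ.image Formula.delta

/-- The interpretation `Y' ∪ X` of `𝒫 ∪ 𝒫'`. -/
def primedInterp (Y X : Finset P) : Finset (P ⊕ P) :=
  X.image Sum.inl ∪ Y.image Sum.inr

/-!
`X` is a soft stable model of `𝔽` iff no `⟨Y, X⟩` with `Y ⊂ X` is a soft HT model of `𝔽`,
because `Y ⊨ (𝔽̄_X)^X` iff `⟨Y, X⟩ ⊨ₕₜ 𝔽_X`. Soft HT models of `𝔽 ∪ ℍ` are the common soft HT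
models of `𝔽` and `ℍ`, so equal soft HT models give structural equivalence. Conversely, if
`⟨Y, X⟩` with `Y ⊂ X` is a soft HT model of `𝔽` but not of `𝔾`, take for `ℍ` the hard facts
`p` (`p ∈ Y`) and hard rules `p → q` (`p, q ∈ X \ Y`): the only soft HT model `⟨Z, X⟩` of `ℍ`
with `Z ⊂ X` is `⟨Y, X⟩`, so `X` is a soft stable model of `𝔾 ∪ ℍ` but not of `𝔽 ∪ ℍ`.
-/

namespace Formula

theorem eval_of_htSat {Y X : Finset P} (hYX : Y ⊆ X) {F : Formula P} (hF : htSat Y X F) :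
    F.eval X = true := by
  induction F with
  | atom p => simpa [eval] using hYX hF
  | bot => exact hF.elim
  | and F G ihF ihG => simp [eval, ihF hF.1, ihG hF.2]
  | or F G ihF ihG =>
      rcases hF with hF | hG
      · simp [eval, ihF hF]
      · simp [eval, ihG hG]
  | imp F G _ _ => exact hF.2

theorem htSat_self_iff {X : Finset P} {F : Formula P} : htSat X X F ↔ F.eval X = true := by
  induction F with
  | atom p => simp [htSat, eval]
  | bot => simp [htSat, eval]
  | and F G ihF ihG => simp [htSat, eval, ihF, ihG]
  | or F G ihF ihG => simp [htSat, eval, ihF, ihG]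
  | imp F G ihF ihG =>
      simp only [htSat, sat, eval, ihF, ihG, Bool.or_eq_true, Bool.not_eq_true']
      constructor
      · exact And.right
      · rintro (hF | hG)
        · exact ⟨by simp [hF], Or.inl hF⟩
        · exact ⟨fun _ => hG, Or.inr hG⟩

theorem eval_reduct_iff_htSat {Y X : Finset P} (hYX : Y ⊆ X) {F : Formula P} :
    (F.reduct X).eval Y = true ↔ htSat Y X F := by
  induction F with
  | atom p =>
      by_cases hp : p ∈ X
      · simp [reduct, eval, htSat, hp]
      · simp only [reduct, hp, if_false, eval, htSat, Bool.false_eq_true, false_iff]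
        exact fun hY => hp (hYX hY)
  | bot => simp [reduct, eval, htSat]
  | and F G ihF ihG =>
      by_cases hX : (and F G).eval X = true
      · rw [reduct, if_pos hX]
        simp [eval, htSat, ihF, ihG]
      · rw [reduct, if_neg hX]
        simpa [eval] using fun h => hX (eval_of_htSat hYX h)
  | or F G ihF ihG =>
      by_cases hX : (or F G).eval X = true
      · rw [reduct, if_pos hX]
        simp [eval, htSat, ihF, ihG]
      · rw [reduct, if_neg hX]
        simpa [eval] using fun h => hX (eval_of_htSat hYX h)
  | imp F G ihF ihG =>
      by_cases hX : (imp F G).eval X = true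
      · rw [reduct, if_pos hX]
        simp only [eval, htSat, Bool.or_eq_true, Bool.not_eq_true', ← ihF, ← ihG]
        constructor
        · rintro (hF | hG)
          · exact ⟨by simp [hF], hX⟩
          · exact ⟨fun _ => hG, hX⟩
        · rintro ⟨h, -⟩
          cases hF : (F.reduct X).eval Y
          · exact Or.inl rfl
          · exact Or.inr (h hF)
      · rw [reduct, if_neg hX]
        simpa [eval] using fun h => hX h.2

end Formula

open Formula

theorem softHT_self (𝔽 : Program P) (X : Finset P) : SoftHT 𝔽 X X :=
  ⟨subset_rfl, fun _ hr => htSat_self_iff.2 (Finset.mem_filter.1 hr).2⟩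

theorem satSet_reductSet_iff_softHT {𝔽 : Program P} {Y X : Finset P} (hYX : Y ⊆ X) :
    satSet Y (reductSet X (formulas (progSat 𝔽 X))) ↔ SoftHT 𝔽 Y X := by
  simp only [satSet, reductSet, formulas, Finset.image_image, Finset.forall_mem_image,
    Function.comp_apply, sat, eval_reduct_iff_htSat hYX, SoftHT, hYX, true_and]

theorem softStable_iff {𝔽 : Program P} {X : Finset P} :
    SoftStable 𝔽 X ↔ ∀ Y ⊂ X, ¬ SoftHT 𝔽 Y X := by
  simp only [SoftStable, StableModel, satSet_reductSet_iff_softHT subset_rfl,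
    softHT_self, true_and]
  exact forall₂_congr fun Y hY => by rw [satSet_reductSet_iff_softHT hY.subset]

theorem softHT_union {𝔽 𝔾 : Program P} {Y X : Finset P} :
    SoftHT (𝔽 ∪ 𝔾) Y X ↔ SoftHT 𝔽 Y X ∧ SoftHT 𝔾 Y X := by
  simp only [SoftHT, progSat, Finset.filter_union, Finset.forall_mem_union]
  tauto

noncomputable def pinProgram (Y X : Finset P) : Program P :=
  Y.image (fun p => (.hard, atom p)) ∪
    ((X \ Y) ×ˢ (X \ Y)).image (fun pq => (.hard, imp (atom pq.1) (atom pq.2)))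

theorem softHT_pinProgram {Y X : Finset P} (hYX : Y ⊆ X) : SoftHT (pinProgram Y X) Y X := by
  refine ⟨hYX, fun r hr => ?_⟩
  obtain ⟨hr, hrX⟩ := Finset.mem_filter.1 hr
  simp only [pinProgram, Finset.mem_union, Finset.mem_image, Finset.mem_product,
    Finset.mem_sdiff] at hr
  rcases hr with ⟨p, hp, rfl⟩ | ⟨⟨p, q⟩, ⟨⟨_, hpY⟩, _⟩, rfl⟩
  · exact hp
  · exact ⟨fun hp => absurd hp hpY, hrX⟩

theorem eq_of_softHT_pinProgram {Y X Z : Finset P} (hYX : Y ⊆ X) (hZX : Z ⊂ X)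
    (hZ : SoftHT (pinProgram Y X) Z X) : Z = Y := by
  have hSat : ∀ r ∈ pinProgram Y X, r.2.eval X = true → htSat Z X r.2 :=
    fun r hr hrX => hZ.2 r (Finset.mem_filter.2 ⟨hr, hrX⟩)
  have hYZ : Y ⊆ Z := fun p hp =>
    hSat _ (Finset.mem_union_left _ (Finset.mem_image_of_mem _ hp)) (by simp [eval, hYX hp])
  refine Finset.Subset.antisymm ?_ hYZ
  intro z hz
  by_contra hzY
  obtain ⟨x, hxX, hxZ⟩ := Finset.exists_of_ssubset hZX
  -- `z ∈ Z` and `x ∉ Z`, so the hard rule `z → x` fails at `⟨Z, X⟩`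
  have hzx : (Weight.hard, imp (atom z) (atom x)) ∈ pinProgram Y X :=
    Finset.mem_union_right _ <| Finset.mem_image.2 ⟨(z, x), Finset.mem_product.2
      ⟨Finset.mem_sdiff.2 ⟨hZX.subset hz, hzY⟩, Finset.mem_sdiff.2 ⟨hxX, fun h => hxZ (hYZ h)⟩⟩,
      rfl⟩
  exact hxZ ((hSat _ hzx (by simp [eval, hxX])).1 hz)

theorem softHT_of_structEquiv {𝔽 𝔾 : Program P} (h : StructEquiv 𝔽 𝔾) {Y X : Finset P}
    (hF : SoftHT 𝔽 Y X) : SoftHT 𝔾 Y X := by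
  rcases hF.1.eq_or_ssubset with rfl | hYX
  · exact softHT_self 𝔾 Y
  by_contra hG
  have hGstable : SoftStable (𝔾 ∪ pinProgram Y X) X := softStable_iff.2 fun Z hZX hZ => by
    obtain ⟨hZG, hZpin⟩ := softHT_union.1 hZ
    obtain rfl := eq_of_softHT_pinProgram hF.1 hZX hZpin
    exact hG hZG
  exact softStable_iff.1 ((h _ X).2 hGstable) Y hYX
    (softHT_union.2 ⟨hF, softHT_pinProgram hF.1⟩)

/-- structural equivalence iff the programs have the same soft HT models. -/
theorem stmt12 {P : Type} [DecidableEq P] (𝔽 𝔾 : Program P) :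
    StructEquiv 𝔽 𝔾 ↔ ∀ Y X : Finset P, SoftHT 𝔽 Y X ↔ SoftHT 𝔾 Y X := by
  refine ⟨fun h Y X => ⟨softHT_of_structEquiv h, softHT_of_structEquiv fun ℍ X => (h ℍ X).symm⟩,
    fun h ℍ X => ?_⟩
  simp only [softStable_iff, softHT_union, h]

end LPMLN
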